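/- arXiv:2002.00383 — 3 statements merged into one kernel-verified Lean document; each statement's English description precedes it below -/
import Mathlib

section
/- Let R be a commutative ring and e : I ⟶ R, f : J ⟶ R idals of R-modules such that (e, f) : I ⊕ J ⟶ R is surjective. Then Spec R is covered by the open sets X_I and X_J, where X_I = {p ∈ Spec R : e_p : I_p ⟶ R_p is an isomorphism} and similarly X_J. Equivalently, for every prime p, at least one of e_p and f_p is surjective. -/
/-- The localization of a linear map `e : J ⟶ R` at a submonoid `S`, as a map
`J_S ⟶ R_S` of localized modules. -/
noncomputable def locMap {R : Type u} [CommRing R] {J : Type u} [AddCommGroup J]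
    [Module R J] (S : Submonoid R) (e : J →ₗ[R] R) :
    LocalizedModule S J →ₗ[R] LocalizedModule S R :=
  IsLocalizedModule.map S (LocalizedModule.mkLinearMap S J)
    (LocalizedModule.mkLinearMap S R) e

/-! A map `e : J ⟶ R` becomes bijective after localizing at `S` as soon as its image meets `S`
and its kernel is `S`-torsion; for an idal the second condition follows from the first,
since `e x • m = e m • x`. At a prime `p`, `e x + f y = 1` forces `e x ∉ p` or `f y ∉ p`. -/

open IsLocalizedModule LocalizedModule

section

variable {R : Type u} [CommRing R] {J : Type u} [AddCommGroup J] [Module R J]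
  (S : Submonoid R) (e : J →ₗ[R] R)

lemma locMap_mk' (m : J) (s : S) :
    locMap S e (mk' (mkLinearMap S J) m s) = mk' (mkLinearMap S R) (e m) s :=
  map_mk' S _ _ e m s

lemma locMap_injective_of_ker_torsion (h : ∀ m, e m = 0 → ∃ s : S, s • m = 0) :
    Function.Injective (locMap S e) := by
  rw [injective_iff_map_eq_zero]
  intro a ha
  obtain ⟨⟨m, s⟩, rfl⟩ := mk'_surjective S (mkLinearMap S J) a
  rw [Function.uncurry_apply_pair, locMap_mk', mk'_eq_zero'] at ha
  obtain ⟨u, hu⟩ := ha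
  obtain ⟨t, ht⟩ := h (u • m) (by rwa [Submonoid.smul_def, map_smul])
  rw [Function.uncurry_apply_pair, mk'_eq_zero']
  exact ⟨t * u, by rw [mul_smul, ht]⟩

lemma locMap_surjective_of_apply_mem {x : J} (hx : e x ∈ S) :
    Function.Surjective (locMap S e) := by
  intro a
  obtain ⟨⟨r, s⟩, rfl⟩ := mk'_surjective S (mkLinearMap S R) a
  refine ⟨mk' (mkLinearMap S J) (r • x) (s * ⟨e x, hx⟩), ?_⟩
  rw [locMap_mk', map_smul, Function.uncurry_apply_pair, smul_eq_mul, mul_comm r]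
  exact mk'_cancel_right _ r s ⟨e x, hx⟩

lemma locMap_bijective_of_idal (he : ∀ x y : J, e x • y = e y • x) {x : J} (hx : e x ∈ S) :
    Function.Bijective (locMap S e) :=
  ⟨locMap_injective_of_ker_torsion S e fun m hm ↦
      ⟨⟨e x, hx⟩, by rw [Submonoid.mk_smul, he, hm, zero_smul]⟩,
    locMap_surjective_of_apply_mem S e hx⟩

end

/-- If `e : I ⟶ R` and `f : J ⟶ R` are idals with `(e,f) : I ⊕ J ⟶ R` surjective,
then `Spec R` is covered by the opens `X_I` and `X_J`: at every prime `p`, at least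
one of the localizations `e_p`, `f_p` is an isomorphism (equivalently, surjective). -/
theorem idal_cover_spec_cover {R : Type u} [CommRing R] {I J : Type u} [AddCommGroup I]
    [AddCommGroup J] [Module R I] [Module R J] (e : I →ₗ[R] R) (f : J →ₗ[R] R)
    (he : ∀ x y : I, e x • y = e y • x) (hf : ∀ x y : J, f x • y = f y • x)
    (hsurj : Function.Surjective ⇑(LinearMap.coprod e f)) :
    ∀ p : PrimeSpectrum R,
      Function.Bijective ⇑(locMap p.asIdeal.primeCompl e) ∨
      Function.Bijective ⇑(locMap p.asIdeal.primeCompl f) := by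
  intro p
  obtain ⟨⟨x, y⟩, hxy⟩ := hsurj 1
  rw [LinearMap.coprod_apply] at hxy
  have hout : e x ∉ p.asIdeal ∨ f y ∉ p.asIdeal := by
    by_contra! h
    exact p.isPrime.one_notMem (hxy ▸ p.asIdeal.add_mem h.1 h.2)
  exact hout.imp (locMap_bijective_of_idal _ e he) (locMap_bijective_of_idal _ f hf)
end

section
/- Let R be a commutative ring and e : I ⟶ R, f : J ⟶ R idals of R-modules with (e,f) : I ⊕ J ⟶ R surjective. Then for every R-module M and every n ∈ ℕ, the square with vertices M, Hom_R(I^{⊗n}, M), Hom_R(J^{⊗n}, M), Hom_R(I^{⊗n} ⊗ J^{⊗n}, M) (all maps given by precomposition with the canonical idal maps) is a pullback square of R-modules. -/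
/-!
Since `I ⊕ J ⟶ R` is onto, the images of `e` and `f` are comaximal ideals, hence so are their
`n`-th powers, which lie in the images of `e^{⊗n}` and `f^{⊗n}`: there are `c`, `d` with
`e^{⊗n}(c) + f^{⊗n}(d) = 1`. A compatible pair `(g, h)` then comes from the single element
`g(c) + h(d)` of `M`, because the idal identity `e(x) • c = e(c) • x` (inherited by tensor powers)
lets one trade `c` for `x` inside `g`.
-/

open TensorProduct CategoryTheory

variable (R : Type u) [CommRing R]

/-- Iterated tensor powers `I^{⊗n}` of an `R`-module, bundled in `ModuleCat R`
(with `I^{⊗0} = R` and `I^{⊗(n+1)} = I^{⊗n} ⊗ I`). -/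
noncomputable def TPow (I : Type u) [AddCommGroup I] [Module R I] : ℕ → ModuleCat R
  | 0 => ModuleCat.of R R
  | n + 1 => ModuleCat.of R (TensorProduct R (TPow I n) I)

/-- The `n`-th tensor power idal `e^{⊗n} : I^{⊗n} ⟶ R` of `e : I ⟶ R`. -/
noncomputable def tpowMap {I : Type u} [AddCommGroup I] [Module R I]
    (e : I →ₗ[R] R) : ∀ n, (TPow R I n : Type u) →ₗ[R] R
  | 0 => LinearMap.id
  | n + 1 => TensorProduct.lift ((LinearMap.mul R R).compl₁₂ (tpowMap e n) e)

variable {I J : Type u} [AddCommGroup I] [AddCommGroup J] [Module R I] [Module R J]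

/-- The canonical map `I^{⊗n} ⊗ J^{⊗n} ⟶ I^{⊗n}`, `x ⊗ y ↦ f^{⊗n}(y) • x`. -/
noncomputable def idalContractI (f : J →ₗ[R] R) (n : ℕ) :
    (TPow R I n : Type u) ⊗[R] (TPow R J n : Type u) →ₗ[R] (TPow R I n : Type u) :=
  TensorProduct.lift (((LinearMap.lsmul R (TPow R I n)).comp (tpowMap R f n)).flip)

/-- The canonical map `I^{⊗n} ⊗ J^{⊗n} ⟶ J^{⊗n}`, `x ⊗ y ↦ e^{⊗n}(x) • y`. -/
noncomputable def idalContractJ (e : I →ₗ[R] R) (n : ℕ) :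
    (TPow R I n : Type u) ⊗[R] (TPow R J n : Type u) →ₗ[R] (TPow R J n : Type u) :=
  TensorProduct.lift ((LinearMap.lsmul R (TPow R J n)).comp (tpowMap R e n))

universe v

theorem ModuleCat.isPullback_of_injective_of_exists {R : Type*} [Ring R]
    {P X Y Z : ModuleCat.{v} R} {t : P ⟶ X} {l : P ⟶ Y} {r : X ⟶ Z} {b : Y ⟶ Z}
    (w : t ≫ r = l ≫ b) (hinj : ∀ p, t p = 0 → l p = 0 → p = 0)
    (hex : ∀ x y, r x = b y → ∃ p, t p = x ∧ l p = y) :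
    IsPullback t l r b := by
  refine IsPullback.of_map (forget _) w ((Limits.Types.isPullback_iff _ _ _ _).mpr
    ⟨congrArg (forget _).map w, fun p q ⟨htp, hlp⟩ => ?_, hex⟩)
  refine sub_eq_zero.mp (hinj (p - q) ?_ ?_) <;> rw [map_sub, sub_eq_zero] <;> assumption

section Idal

variable {R}

def IsIdal (e : I →ₗ[R] R) : Prop :=
  ∀ x y : I, e x • y = e y • x

theorem IsIdal.tensor {e : I →ₗ[R] R} {f : J →ₗ[R] R} (he : IsIdal e) (hf : IsIdal f) :
    IsIdal (TensorProduct.lift ((LinearMap.mul R R).compl₁₂ e f)) := by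
  intro x y
  induction x using TensorProduct.induction_on with
  | zero => simp
  | add x₁ x₂ h₁ h₂ => rw [map_add, add_smul, h₁, h₂, smul_add]
  | tmul a b =>
    induction y using TensorProduct.induction_on with
    | zero => simp
    | add y₁ y₂ h₁ h₂ => rw [map_add, add_smul, ← h₁, ← h₂, smul_add]
    | tmul c d =>
      simp only [TensorProduct.lift.tmul, LinearMap.compl₁₂_apply, LinearMap.mul_apply']
      rw [← TensorProduct.smul_tmul_smul, ← TensorProduct.smul_tmul_smul, he a c, hf b d]

theorem isIdal_tpowMap {e : I →ₗ[R] R} (he : IsIdal e) : ∀ n, IsIdal (tpowMap R e n)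
  | 0 => fun (x y : R) => mul_comm x y
  | n + 1 => (isIdal_tpowMap he n).tensor he

theorem range_pow_le_range_tpowMap (e : I →ₗ[R] R) :
    ∀ n, LinearMap.range e ^ n ≤ LinearMap.range (tpowMap R e n)
  | 0 => fun r _ => ⟨r, rfl⟩
  | n + 1 => by
    rw [pow_succ, Ideal.mul_le]
    rintro _ hr _ ⟨a, rfl⟩
    obtain ⟨x, rfl⟩ := range_pow_le_range_tpowMap e n hr
    exact ⟨x ⊗ₜ a, rfl⟩

theorem exists_tpowMap_add_tpowMap_eq_one {e : I →ₗ[R] R} {f : J →ₗ[R] R}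
    (hsurj : Function.Surjective (LinearMap.coprod e f)) (n : ℕ) :
    ∃ c d, tpowMap R e n c + tpowMap R f n d = 1 := by
  have hcover : LinearMap.range e ⊔ LinearMap.range f = ⊤ := by
    rw [← LinearMap.range_coprod, LinearMap.range_eq_top.mpr hsurj]
  have hone : (1 : R) ∈ LinearMap.range (tpowMap R e n) ⊔ LinearMap.range (tpowMap R f n) :=
    sup_le_sup (range_pow_le_range_tpowMap e n) (range_pow_le_range_tpowMap f n)
      ((Ideal.pow_sup_pow_eq_top hcover).symm ▸ Submodule.mem_top)
  obtain ⟨_, ⟨c, rfl⟩, _, ⟨d, rfl⟩, hcd⟩ := Submodule.mem_sup.mp hone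
  exact ⟨c, d, hcd⟩

variable {M : Type u} [AddCommGroup M] [Module R M]

theorem IsIdal.smul_add_eq {e : I →ₗ[R] R} {f : J →ₗ[R] R} (he : IsIdal e) {c : I} {d : J}
    (hcd : e c + f d = 1) {g : I →ₗ[R] M} {h : J →ₗ[R] M}
    (hgh : ∀ x y, g (f y • x) = h (e x • y)) (x : I) :
    e x • (g c + h d) = g x :=
  calc e x • (g c + h d) = g (e c • x) + g (f d • x) := by
        rw [smul_add, ← map_smul, ← map_smul, he x c, hgh x d]
    _ = g x := by rw [← map_add, ← add_smul, hcd, one_smul]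

theorem isPullback_smulRightₗ_of_isIdal {e : I →ₗ[R] R} {f : J →ₗ[R] R}
    (he : IsIdal e) (hf : IsIdal f) {c : I} {d : J} (hcd : e c + f d = 1) :
    IsPullback
      (ModuleCat.ofHom (LinearMap.smulRightₗ e : M →ₗ[R] (I →ₗ[R] M)))
      (ModuleCat.ofHom (LinearMap.smulRightₗ f : M →ₗ[R] (J →ₗ[R] M)))
      (ModuleCat.ofHom (LinearMap.lcomp R M (TensorProduct.rid R I ∘ₗ f.lTensor I)))
      (ModuleCat.ofHom (LinearMap.lcomp R M (TensorProduct.lid R J ∘ₗ e.rTensor J))) := by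
  refine ModuleCat.isPullback_of_injective_of_exists ?_ ?_ ?_
  · ext m : 2
    refine TensorProduct.ext' fun x y => ?_
    simp [smul_smul, mul_comm]
  · intro m hI hJ
    have hIc : e c • m = 0 := LinearMap.congr_fun hI c
    have hJd : f d • m = 0 := LinearMap.congr_fun hJ d
    rw [← one_smul R m, ← hcd, add_smul, hIc, hJd, add_zero]
  · intro g h hgh
    have hcompat (x : I) (y : J) : g (f y • x) = h (e x • y) := by
      simpa using LinearMap.congr_fun hgh (x ⊗ₜ y)
    refine ⟨g c + h d, LinearMap.ext fun x => he.smul_add_eq hcd hcompat x,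
      LinearMap.ext fun y => ?_⟩
    rw [add_comm] at hcd ⊢
    exact hf.smul_add_eq hcd (fun y x => (hcompat x y).symm) y

theorem idalContractI_eq_rid_comp_lTensor (f : J →ₗ[R] R) (n : ℕ) :
    idalContractI R (I := I) f n =
      TensorProduct.rid R (TPow R I n) ∘ₗ (tpowMap R f n).lTensor (TPow R I n) :=
  TensorProduct.ext' fun _ _ => rfl

theorem idalContractJ_eq_lid_comp_rTensor (e : I →ₗ[R] R) (n : ℕ) :
    idalContractJ R (J := J) e n =
      TensorProduct.lid R (TPow R J n) ∘ₗ (tpowMap R e n).rTensor (TPow R J n) :=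
  TensorProduct.ext' fun _ _ => rfl

end Idal

/-- If idals `e : I ⟶ R` and `f : J ⟶ R` form an idal cover (`I ⊕ J ⟶ R` surjective),
then for every `R`-module `M` and every `n`, the square
`M → Hom(I^{⊗n}, M), Hom(J^{⊗n}, M) → Hom(I^{⊗n} ⊗ J^{⊗n}, M)`, with maps given by
precomposition with the canonical idal maps, is a pullback of `R`-modules. -/
theorem idal_cover_hom_pullback (e : I →ₗ[R] R) (f : J →ₗ[R] R)
    (he : ∀ x y : I, e x • y = e y • x) (hf : ∀ x y : J, f x • y = f y • x)
    (hsurj : Function.Surjective ⇑(LinearMap.coprod e f))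
    (M : Type u) [AddCommGroup M] [Module R M] (n : ℕ) :
    IsPullback
      (ModuleCat.ofHom
        (LinearMap.smulRightₗ (tpowMap R e n) :
          M →ₗ[R] ((TPow R I n : Type u) →ₗ[R] M)))
      (ModuleCat.ofHom
        (LinearMap.smulRightₗ (tpowMap R f n) :
          M →ₗ[R] ((TPow R J n : Type u) →ₗ[R] M)))
      (ModuleCat.ofHom (LinearMap.lcomp R M (idalContractI R (I := I) f n)))
      (ModuleCat.ofHom (LinearMap.lcomp R M (idalContractJ R (J := J) e n))) := by
  obtain ⟨c, d, hcd⟩ := exists_tpowMap_add_tpowMap_eq_one hsurj n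
  rw [idalContractI_eq_rid_comp_lTensor, idalContractJ_eq_lid_comp_rTensor]
  exact isPullback_smulRightₗ_of_isIdal (isIdal_tpowMap he n) (isIdal_tpowMap hf n) hcd
end

section
/- Let C be a symmetric monoidal category with finite colimits such that ⊗ preserves finite colimits in each variable. Then the full subcategory of idals (objects of the slice category C/1 whose structure morphism e : I ⟶ 1 satisfies the idal equation) is reflective in C/1: for any morphism f : A ⟶ 1, the coequalizer π : A ⟶ I of the pair of morphisms f ⊗ id_A, id_A ⊗ f : A ⊗ A ⇉ A (composed with unitors) admits a unique morphism e : I ⟶ 1 with e ∘ π = f, this e is an idal, and π : (A, f) ⟶ (I, e) is a reflection of f into the category of idals. -/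
/-!
Precomposed with `π ⊗ π`, the two sides of the idal equation for `e : I ⟶ 𝟙` become the two
composites of the coequalized pair with `π` (where `f = π ≫ e`); since `⊗` preserves epimorphisms
in each variable, `π ⊗ π` is epi, so `e` is an idal. Read backwards for an idal `e'`, the same
computation shows that every `g` from `f` into `e'` coequalizes the pair, hence factors through
`π`; the identity of `𝟙`, an idal, yields `e` itself.
-/

open CategoryTheory MonoidalCategory Limits

namespace CategoryTheory.MonoidalCategory

variable {C : Type*} [Category C] [MonoidalCategory C]

def IsIdal {I : C} (e : I ⟶ 𝟙_ C) : Prop :=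
  (e ▷ I) ≫ (λ_ I).hom = (I ◁ e) ≫ (ρ_ I).hom

theorem isIdal_id : IsIdal (𝟙 (𝟙_ C)) := by
  simp [IsIdal, unitors_equal]

theorem tensorHom_comp_whiskerRight_leftUnitor {A B X Y : C} (g : A ⟶ X) (h : B ⟶ Y)
    (e : X ⟶ 𝟙_ C) :
    (g ⊗ₘ h) ≫ (e ▷ Y) ≫ (λ_ Y).hom = ((g ≫ e) ▷ B) ≫ (λ_ B).hom ≫ h := by
  simp only [tensorHom_def, comp_whiskerRight, Category.assoc, whisker_exchange_assoc,
    leftUnitor_naturality]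

theorem tensorHom_comp_whiskerLeft_rightUnitor {A B X Y : C} (g : A ⟶ X) (h : B ⟶ Y)
    (e : Y ⟶ 𝟙_ C) :
    (g ⊗ₘ h) ≫ (X ◁ e) ≫ (ρ_ X).hom = (A ◁ (h ≫ e)) ≫ (ρ_ A).hom ≫ g := by
  simp only [tensorHom_def', MonoidalCategory.whiskerLeft_comp, Category.assoc,
    ← whisker_exchange_assoc, rightUnitor_naturality]

theorem IsIdal.whisker_unitor_comp {A I : C} {e : I ⟶ 𝟙_ C} (he : IsIdal e) (g : A ⟶ I) :
    ((g ≫ e) ▷ A) ≫ (λ_ A).hom ≫ g = (A ◁ (g ≫ e)) ≫ (ρ_ A).hom ≫ g := by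
  rw [← tensorHom_comp_whiskerRight_leftUnitor, ← tensorHom_comp_whiskerLeft_rightUnitor, he]

theorem isIdal_of_epi_tensorHom {A I : C} (π : A ⟶ I) [Epi (π ⊗ₘ π)] (e : I ⟶ 𝟙_ C)
    (h : ((π ≫ e) ▷ A) ≫ (λ_ A).hom ≫ π = (A ◁ (π ≫ e)) ≫ (ρ_ A).hom ≫ π) : IsIdal e := by
  rw [IsIdal, ← cancel_epi (π ⊗ₘ π), tensorHom_comp_whiskerRight_leftUnitor,
    tensorHom_comp_whiskerLeft_rightUnitor, h]

theorem epi_tensorHom [∀ X : C, (tensorLeft X).PreservesEpimorphisms]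
    [∀ X : C, (tensorRight X).PreservesEpimorphisms] {A B X Y : C} (g : A ⟶ X) (h : B ⟶ Y)
    [Epi g] [Epi h] : Epi (g ⊗ₘ h) := by
  have : Epi (g ▷ B) := (tensorRight B).map_epi g
  have : Epi (X ◁ h) := (tensorLeft X).map_epi h
  rw [tensorHom_def]
  exact epi_comp _ _

end CategoryTheory.MonoidalCategory

/-- Idals are reflective in the slice over the unit: let `C` be symmetric monoidal with
finite colimits, `⊗` preserving them in each variable.  Given `f : A ⟶ 𝟙` and a
coequalizer `π : A ⟶ I` of the pair `λ_A ∘ (f ⊗ id_A), ρ_A ∘ (id_A ⊗ f) : A ⊗ A ⇉ A`,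
there is a unique `e : I ⟶ 𝟙` with `π ≫ e = f`; this `e` is an idal, and
`π : (A, f) ⟶ (I, e)` is a reflection of `f` into the category of idals: every
morphism in `C/𝟙` from `f` to an idal factors uniquely through `π`. -/
theorem idal_reflection {C : Type*} [Category C] [MonoidalCategory C] [SymmetricCategory C]
    [HasFiniteColimits C]
    [∀ X : C, PreservesFiniteColimits (MonoidalCategory.tensorLeft X)]
    [∀ X : C, PreservesFiniteColimits (MonoidalCategory.tensorRight X)]
    {A I : C} (f : A ⟶ 𝟙_ C) (π : A ⟶ I)
    (hw : (f ▷ A) ≫ (λ_ A).hom ≫ π = (A ◁ f) ≫ (ρ_ A).hom ≫ π)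
    (hc : Nonempty (IsColimit (Cofork.ofπ (f := (f ▷ A) ≫ (λ_ A).hom)
      (g := (A ◁ f) ≫ (ρ_ A).hom) π (by simpa using hw)))) :
    ∃! e : I ⟶ 𝟙_ C,
      π ≫ e = f ∧
      (e ▷ I) ≫ (λ_ I).hom = (I ◁ e) ≫ (ρ_ I).hom ∧
      ∀ (I' : C) (e' : I' ⟶ 𝟙_ C),
        (e' ▷ I') ≫ (λ_ I').hom = (I' ◁ e') ≫ (ρ_ I').hom →
        ∀ g : A ⟶ I', g ≫ e' = f →
          ∃! h : I ⟶ I', π ≫ h = g ∧ h ≫ e' = e := by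
  obtain ⟨hc⟩ := hc
  have : Epi π := epi_of_isColimit_cofork hc
  have : Epi (π ⊗ₘ π) := epi_tensorHom π π
  have desc {W : C} (k : A ⟶ W)
      (hk : (f ▷ A) ≫ (λ_ A).hom ≫ k = (A ◁ f) ≫ (ρ_ A).hom ≫ k) : ∃! l : I ⟶ W, π ≫ l = k :=
    Cofork.IsColimit.existsUnique hc k (by simpa using hk)
  obtain ⟨e, rfl, he_unique⟩ := desc f (by simpa using isIdal_id.whisker_unitor_comp f)
  refine ⟨e, ⟨rfl, isIdal_of_epi_tensorHom π e hw, ?_⟩, fun e₂ he₂ => he_unique e₂ he₂.1⟩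
  intro I' e' he' g hg
  obtain ⟨h, rfl, h_unique⟩ := desc g (hg ▸ IsIdal.whisker_unitor_comp he' g)
  refine ⟨h, ⟨rfl, ?_⟩, fun h₂ hh₂ => h_unique h₂ hh₂.1⟩
  rwa [← cancel_epi π, ← Category.assoc]
end
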